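/- (Rate-distortion optimality) Suppose Φ satisfies the modified RIP with constant ε ∈ (0,1) on all vectors that are differences of k-sparse vectors with common support. Let D₁ = inf over codebooks Ĉ of k-sparse reconstructions with |Ĉ| ≤ 2^{nR} of (1/n)E[‖X − X̂‖_p], and let D₂ be the corresponding infimum achieved by quantizing Y = ΦX with codebook ΦĈ under the measured distortion (1/(nm))∑_i E[|Y_i − ⟨Φ_i, X̂⟩|/‖Φ_i‖_q], then mapping back. Then D₂ ≤ ((1+ε)/(1−ε))·D₁. -/

import Mathlib

open MeasureTheory

/-- The `p`-norm of a vector in `ℝⁿ`. -/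
noncomputable def pnorm (p : ℝ) {n : ℕ} (x : Fin n → ℝ) : ℝ :=
  (∑ j, |x j| ^ p) ^ (1 / p)

/-- A quantizer (reconstruction map) is feasible if its codebook (range) has at
most `2^{nR}` codewords and it preserves the support pattern of the source:
zero coordinates of the input stay zero (so `X̂(Tᶜ) = X(Tᶜ) = 0`). -/
def Feasible (n : ℕ) (R : ℝ) (f : (Fin n → ℝ) → (Fin n → ℝ)) : Prop :=
  (Set.range f).Finite ∧ ((Set.range f).ncard : ℝ) ≤ 2 ^ ((n : ℝ) * R) ∧
    ∀ x : Fin n → ℝ, ∀ j, x j = 0 → f x j = 0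

/-- Normalized expected `p`-norm source distortion of a quantizer `f`. -/
noncomputable def srcDist {Ω : Type*} [MeasurableSpace Ω] (μ : Measure Ω)
    (n : ℕ) (p : ℝ) (X : Ω → Fin n → ℝ) (f : (Fin n → ℝ) → (Fin n → ℝ)) : ℝ :=
  (1 / n) * ∫ ω, pnorm p (X ω - f (X ω)) ∂μ

/-- Normalized expected measured distortion of a quantizer `f` on `Y = ΦX`,
with codebook `ΦĈ`. -/
noncomputable def measDist {Ω : Type*} [MeasurableSpace Ω] (μ : Measure Ω)
    (m n : ℕ) (q : ℝ) (Φ : Matrix (Fin m) (Fin n) ℝ)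
    (X : Ω → Fin n → ℝ) (f : (Fin n → ℝ) → (Fin n → ℝ)) : ℝ :=
  (1 / ((n : ℝ) * m)) *
    ∑ i, ∫ ω, |(∑ j, Φ i j * X ω j) - ∑ j, Φ i j * f (X ω) j| / pnorm q (Φ i) ∂μ

/-!
For a feasible quantizer `f` the residual `X - f X` vanishes wherever `X` does, so it is
`k`-sparse and the RIP sandwiches its measured norm between `(1 - ε)` and `(1 + ε)` times its
`p`-norm. Integrating, `(1 - ε) srcDist f ≤ measDist f ≤ (1 + ε) srcDist f` for every feasible `f`.
If `f` minimizes the measured distortion, then for every feasible `g`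
`(1 - ε) srcDist f ≤ measDist f ≤ measDist g ≤ (1 + ε) srcDist g`; taking the infimum over `g`
directly replaces the paper's `δ`-optimal codebook and limit `δ → 0`.
-/

noncomputable def measNorm {m n : ℕ} (q : ℝ) (Φ : Matrix (Fin m) (Fin n) ℝ)
    (v : Fin n → ℝ) : ℝ :=
  (1 / m) * ∑ i, |∑ j, Φ i j * v j| / pnorm q (Φ i)

lemma pnorm_nonneg (p : ℝ) {n : ℕ} (x : Fin n → ℝ) : 0 ≤ pnorm p x :=
  Real.rpow_nonneg (Finset.sum_nonneg fun _ _ => Real.rpow_nonneg (abs_nonneg _) _) _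

lemma measNorm_sub {m n : ℕ} (q : ℝ) (Φ : Matrix (Fin m) (Fin n) ℝ) (x y : Fin n → ℝ) :
    measNorm q Φ (x - y) =
      (1 / m) * ∑ i, |(∑ j, Φ i j * x j) - ∑ j, Φ i j * y j| / pnorm q (Φ i) := by
  simp only [measNorm, Pi.sub_apply, mul_sub, Finset.sum_sub_distrib]

lemma card_support_sub_le {n : ℕ} {f : (Fin n → ℝ) → (Fin n → ℝ)}
    (hf : ∀ x j, x j = 0 → f x j = 0) (x : Fin n → ℝ) :
    (Finset.univ.filter fun j => (x - f x) j ≠ 0).card ≤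
      (Finset.univ.filter fun j => x j ≠ 0).card := by
  refine Finset.card_le_card (Finset.monotone_filter_right _ fun j _ hj hx => hj ?_)
  rw [Pi.sub_apply, hx, hf x j hx, sub_zero]

section Distortion

variable {Ω : Type*} [MeasurableSpace Ω] {μ : Measure Ω} {m n : ℕ} {p q : ℝ}
  {Φ : Matrix (Fin m) (Fin n) ℝ} {X : Ω → Fin n → ℝ} {f : (Fin n → ℝ) → (Fin n → ℝ)}

lemma srcDist_nonneg : 0 ≤ srcDist μ n p X f :=
  mul_nonneg (by positivity) (integral_nonneg fun _ => pnorm_nonneg _ _)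

lemma integrable_measNorm_residual (hint : ∀ i, Integrable
      (fun ω => |(∑ j, Φ i j * X ω j) - ∑ j, Φ i j * f (X ω) j| / pnorm q (Φ i)) μ) :
    Integrable (fun ω => measNorm q Φ (X ω - f (X ω))) μ := by
  simp only [measNorm_sub]
  exact (integrable_finsetSum _ fun i _ => hint i).const_mul _

lemma measDist_eq_integral_measNorm (hint : ∀ i, Integrable
      (fun ω => |(∑ j, Φ i j * X ω j) - ∑ j, Φ i j * f (X ω) j| / pnorm q (Φ i)) μ) :
    measDist μ m n q Φ X f = (1 / n) * ∫ ω, measNorm q Φ (X ω - f (X ω)) ∂μ := by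
  simp only [measDist, measNorm_sub, integral_const_mul,
    integral_finsetSum _ fun i _ => hint i, ← one_div_mul_one_div, mul_assoc]

lemma mul_srcDist_le_measDist (hsrc : Integrable (fun ω => pnorm p (X ω - f (X ω))) μ)
    (hmeas : ∀ i, Integrable
      (fun ω => |(∑ j, Φ i j * X ω j) - ∑ j, Φ i j * f (X ω) j| / pnorm q (Φ i)) μ) (c : ℝ)
    (h : ∀ ω, c * pnorm p (X ω - f (X ω)) ≤ measNorm q Φ (X ω - f (X ω))) :
    c * srcDist μ n p X f ≤ measDist μ m n q Φ X f := by
  rw [measDist_eq_integral_measNorm hmeas, srcDist, mul_left_comm, ← integral_const_mul c]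
  exact mul_le_mul_of_nonneg_left
    (integral_mono (hsrc.const_mul c) (integrable_measNorm_residual hmeas) h) (by positivity)

lemma measDist_le_mul_srcDist (hsrc : Integrable (fun ω => pnorm p (X ω - f (X ω))) μ)
    (hmeas : ∀ i, Integrable
      (fun ω => |(∑ j, Φ i j * X ω j) - ∑ j, Φ i j * f (X ω) j| / pnorm q (Φ i)) μ) (c : ℝ)
    (h : ∀ ω, measNorm q Φ (X ω - f (X ω)) ≤ c * pnorm p (X ω - f (X ω))) :
    measDist μ m n q Φ X f ≤ c * srcDist μ n p X f := by
  rw [measDist_eq_integral_measNorm hmeas, srcDist, mul_left_comm c, ← integral_const_mul c]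
  exact mul_le_mul_of_nonneg_left
    (integral_mono (integrable_measNorm_residual hmeas) (hsrc.const_mul c) h) (by positivity)

end Distortion

lemma sInf_argmin_le_div_mul_sInf {α : Type*} (P : α → Prop) (s d : α → ℝ) {a b : ℝ}
    (ha : 0 < a) (hb : 0 ≤ b) (hs : ∀ f, P f → 0 ≤ s f)
    (hlow : ∀ f, P f → a * s f ≤ d f) (hup : ∀ f, P f → d f ≤ b * s f) :
    sInf {x | ∃ f, P f ∧ (∀ g, P g → d f ≤ d g) ∧ x = s f} ≤
      b / a * sInf {x | ∃ f, P f ∧ x = s f} := by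
  have hba : 0 ≤ b / a := div_nonneg hb ha.le
  rcases Set.eq_empty_or_nonempty {x | ∃ f, P f ∧ (∀ g, P g → d f ≤ d g) ∧ x = s f} with
    hempty | ⟨_, f, hf, hmin, rfl⟩
  · rw [hempty, Real.sInf_empty]
    exact mul_nonneg hba (Real.sInf_nonneg (by rintro _ ⟨g, hg, rfl⟩; exact hs g hg))
  calc sInf {x | ∃ f, P f ∧ (∀ g, P g → d f ≤ d g) ∧ x = s f}
      ≤ s f := csInf_le ⟨0, by rintro _ ⟨g, hg, -, rfl⟩; exact hs g hg⟩ ⟨f, hf, hmin, rfl⟩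
    _ ≤ b / a * sInf {x | ∃ f, P f ∧ x = s f} := by
      rw [← smul_eq_mul, ← Real.sInf_smul_of_nonneg hba]
      refine le_csInf ⟨b / a * s f, Set.smul_mem_smul_set ⟨f, hf, rfl⟩⟩ ?_
      rintro _ ⟨_, ⟨g, hg, rfl⟩, rfl⟩
      change s f ≤ b / a * s g
      rw [div_mul_eq_mul_div, le_div_iff₀ ha, mul_comm]
      exact (hlow f hf).trans ((hmin g hg).trans (hup g hg))

theorem stmt18_general {Ω : Type*} [MeasurableSpace Ω] (μ : Measure Ω)
    (m n k : ℕ) (R : ℝ)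
    (Φ : Matrix (Fin m) (Fin n) ℝ)
    (p q ε : ℝ) (hε : ε ∈ Set.Ioo (0 : ℝ) 1)
    (hRIP : ∀ v : Fin n → ℝ, (Finset.univ.filter fun j => v j ≠ 0).card ≤ k →
      (1 - ε) * pnorm p v ≤ (1 / m) * ∑ i, |∑ j, Φ i j * v j| / pnorm q (Φ i) ∧
      (1 / m) * ∑ i, |∑ j, Φ i j * v j| / pnorm q (Φ i) ≤ (1 + ε) * pnorm p v)
    (X : Ω → Fin n → ℝ)
    (hsparse : ∀ ω, (Finset.univ.filter fun j => X ω j ≠ 0).card ≤ k)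
    (hIntd : ∀ f, Feasible n R f →
      Integrable (fun ω => pnorm p (X ω - f (X ω))) μ)
    (hIntm : ∀ f, Feasible n R f → ∀ i : Fin m, Integrable
      (fun ω => |(∑ j, Φ i j * X ω j) - ∑ j, Φ i j * f (X ω) j| / pnorm q (Φ i)) μ) :
    sInf {d : ℝ | ∃ f, Feasible n R f ∧
        (∀ g, Feasible n R g → measDist μ m n q Φ X f ≤ measDist μ m n q Φ X g) ∧
        d = srcDist μ n p X f} ≤
      (1 + ε) / (1 - ε) * sInf {d : ℝ | ∃ f, Feasible n R f ∧ d = srcDist μ n p X f} := by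
  obtain ⟨hε0, hε1⟩ := hε
  have hRIP_residual : ∀ f, Feasible n R f → ∀ ω,
      (1 - ε) * pnorm p (X ω - f (X ω)) ≤ measNorm q Φ (X ω - f (X ω)) ∧
      measNorm q Φ (X ω - f (X ω)) ≤ (1 + ε) * pnorm p (X ω - f (X ω)) := fun f hf ω =>
    hRIP _ ((card_support_sub_le hf.2.2 (X ω)).trans (hsparse ω))
  exact sInf_argmin_le_div_mul_sInf (Feasible n R) (srcDist μ n p X) (measDist μ m n q Φ X)
    (by linarith) (by linarith) (fun _ _ => srcDist_nonneg)
    (fun f hf => mul_srcDist_le_measDist (hIntd f hf) (hIntm f hf) _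
      fun ω => (hRIP_residual f hf ω).1)
    (fun f hf => measDist_le_mul_srcDist (hIntd f hf) (hIntm f hf) _
      fun ω => (hRIP_residual f hf ω).2)

/-- rate-distortion optimality of compressive sensing followed by
quantization: `D₂ ≤ ((1+ε)/(1−ε)) D₁`, where `D₁` is the optimal source
distortion over feasible codebooks and `D₂` is the source distortion achieved
by quantizers minimizing the measured distortion. -/
theorem stmt18 {Ω : Type*} [MeasurableSpace Ω] (μ : Measure Ω) [IsProbabilityMeasure μ]
    (m n k : ℕ) (hm : 0 < m) (hn : 0 < n) (R : ℝ)
    (Φ : Matrix (Fin m) (Fin n) ℝ) (hrows : ∀ i, Φ i ≠ 0)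
    (p q ε : ℝ) (hp : 1 ≤ p) (hpq : 1 / p + 1 / q = 1) (hε : ε ∈ Set.Ioo (0 : ℝ) 1)
    (hRIP : ∀ v : Fin n → ℝ, (Finset.univ.filter fun j => v j ≠ 0).card ≤ k →
      (1 - ε) * pnorm p v ≤ (1 / m) * ∑ i, |∑ j, Φ i j * v j| / pnorm q (Φ i) ∧
      (1 / m) * ∑ i, |∑ j, Φ i j * v j| / pnorm q (Φ i) ≤ (1 + ε) * pnorm p v)
    (X : Ω → Fin n → ℝ)
    (hsparse : ∀ ω, (Finset.univ.filter fun j => X ω j ≠ 0).card ≤ k)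
    (hIntd : ∀ f, Feasible n R f →
      Integrable (fun ω => pnorm p (X ω - f (X ω))) μ)
    (hIntm : ∀ f, Feasible n R f → ∀ i : Fin m, Integrable
      (fun ω => |(∑ j, Φ i j * X ω j) - ∑ j, Φ i j * f (X ω) j| / pnorm q (Φ i)) μ) :
    sInf {d : ℝ | ∃ f, Feasible n R f ∧
        (∀ g, Feasible n R g → measDist μ m n q Φ X f ≤ measDist μ m n q Φ X g) ∧
        d = srcDist μ n p X f} ≤
      (1 + ε) / (1 - ε) * sInf {d : ℝ | ∃ f, Feasible n R f ∧ d = srcDist μ n p X f} :=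
  stmt18_general μ m n k R Φ p q ε hε hRIP X hsparse hIntd hIntm
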